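/- (Terminating reduction) For natural number n, complex a, b, c, d with a not an integer, d not a nonpositive integer, and z a complex number, ₃F₂(a, b, c; a - n, d; z) = (1/(1-a)_n) · ∑_{p=0}^{n} (-z)^p · C(n,p) · (1-a)_{n-p} · ((b)_p (c)_p / (d)_p) · ₂F₁(b+p, c+p; d+p; z), provided all series converge (e.g. |z| < 1). -/

import Mathlib

/-! The identity holds coefficient by coefficient. Reflection gives
`(a)_m / (a-n)_m = (1-a-m)_n / (1-a)_n`, and Chu–Vandermonde splits `(1-a-m)_n` as
`∑ₚ C(n,p) (1-a)_{n-p} (-m)_p`. Since `(-m)_p / m! = (-1)^p / (m-p)!` for `p ≤ m` and `(-m)_p = 0`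
for `p > m`, together with `(b)_m = (b)_p (b+p)_{m-p}` the `p`-th piece is `(-z)^p (b)_p (c)_p / (d)_p`
times the `(m-p)`-th term of `₂F₁(b+p, c+p; d+p; z)`. Each of these Gauss series converges for
`|z| < 1` by the ratio test, so the finite sum over `p` can be taken out of the sum over `m`. -/

open Complex Finset Filter Topology Polynomial

/-- Pochhammer symbol `(x)_k = x (x+1) ⋯ (x+k-1)`. -/
noncomputable def poch (x : ℂ) (k : ℕ) : ℂ := ∏ i ∈ Finset.range k, (x + i)

/-- Beta function `B(x,y) = Γ(x) Γ(y) / Γ(x+y)`. -/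
noncomputable def cBeta (x y : ℂ) : ℂ :=
  Complex.Gamma x * Complex.Gamma y / Complex.Gamma (x + y)

theorem poch_eq_smeval_ascPochhammer (x : ℂ) (k : ℕ) :
    poch x k = (ascPochhammer ℕ k).smeval x := by
  rw [ascPochhammer_smeval_eq_eval]
  induction k with
  | zero => simp [poch]
  | succ k ih => rw [poch, prod_range_succ, ← poch, ih, ascPochhammer_succ_eval]

theorem poch_succ (x : ℂ) (k : ℕ) : poch x (k + 1) = poch x k * (x + k) :=
  prod_range_succ _ _

theorem poch_add (x : ℂ) (p q : ℕ) : poch x (p + q) = poch x p * poch (x + p) q := by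
  simp only [poch, prod_range_add, Nat.cast_add, add_assoc]

theorem poch_ne_zero {x : ℂ} (hx : ∀ i : ℕ, x + i ≠ 0) (k : ℕ) : poch x k ≠ 0 :=
  prod_ne_zero_iff.mpr fun i _ => hx i

theorem poch_neg (x : ℂ) (k : ℕ) : poch (-x) k = (-1) ^ k * (descPochhammer ℤ k).smeval x := by
  rw [← aeval_eq_smeval, ← eval_map_algebraMap, descPochhammer_map,
    ← ascPochhammer_eval_neg_eq_descPochhammer, poch_eq_smeval_ascPochhammer,
    ascPochhammer_smeval_eq_eval]

theorem poch_one_sub (x : ℂ) (m : ℕ) : poch (1 - x) m = (-1) ^ m * poch (x - m) m := by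
  rw [show 1 - x = -(x - 1) by ring, poch_neg, descPochhammer_smeval_eq_ascPochhammer,
    poch_eq_smeval_ascPochhammer]
  ring_nf

theorem poch_neg_natCast (m p : ℕ) : poch (-(m : ℂ)) p = (-1) ^ p * (m.descFactorial p : ℂ) := by
  rw [poch_neg, descPochhammer_smeval_eq_descFactorial]

theorem poch_add_eq_sum (x y : ℂ) (n : ℕ) :
    poch (x + y) n = ∑ p ∈ range (n + 1), (n.choose p : ℂ) * poch x p * poch y (n - p) := by
  have h (w : ℂ) (k : ℕ) : poch w k = (-1) ^ k * (descPochhammer ℤ k).smeval (-w) := by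
    rw [← poch_neg, neg_neg]
  rw [← Nat.sum_antidiagonal_eq_sum_range_succ (fun i j => (n.choose i : ℂ) * poch x i * poch y j),
    h, neg_add, Ring.descPochhammer_smeval_add _ (Commute.all _ _), mul_sum]
  refine sum_congr rfl fun ij hij => ?_
  rw [h x, h y, ← mem_antidiagonal.mp hij, pow_add]
  ring

theorem poch_one_sub_sub_mul (a : ℂ) (n m : ℕ) :
    poch (1 - a - m) n * poch (a - n) m = poch (1 - a) n * poch a m := by
  have h := poch_add (a - n) n m
  rw [add_comm n m, poch_add, sub_add_cancel] at h
  rw [sub_sub, poch_one_sub, poch_one_sub, mul_assoc, mul_assoc, ← h]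
  ring_nf

theorem summable_of_eq_smul_of_tendsto_norm_lt_one {𝕜 E : Type*} [NormedField 𝕜]
    [NormedAddCommGroup E] [NormedSpace 𝕜 E] [CompleteSpace E] {f : ℕ → E} {ρ : ℕ → 𝕜} {l : ℝ}
    (hl : l < 1) (hρ : Tendsto (fun k => ‖ρ k‖) atTop (𝓝 l)) (hf : ∀ k, f (k + 1) = ρ k • f k) :
    Summable f := by
  obtain ⟨r, hlr, hr⟩ := exists_between hl
  refine summable_of_ratio_norm_eventually_le hr ?_
  filter_upwards [hρ.eventually (gt_mem_nhds hlr)] with k hk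
  rw [hf, norm_smul]
  exact mul_le_mul_of_nonneg_right hk.le (norm_nonneg _)

theorem HasSum.ite_le_sub {α : Type*} [AddCommMonoid α] [TopologicalSpace α] {g : ℕ → α} {s : α}
    (hg : HasSum g s) (p : ℕ) : HasSum (fun m => if p ≤ m then g (m - p) else 0) s := by
  convert (hasSum_extend_zero (add_left_injective p)).mpr hg with m
  split_ifs with h
  · obtain ⟨k, rfl⟩ := Nat.exists_eq_add_of_le' h
    rw [(add_left_injective p).extend_apply, Nat.add_sub_cancel]
  · rw [Function.extend_apply' _ _ _ fun ⟨k, hk⟩ => h (hk ▸ Nat.le_add_left p k)]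
    rfl

noncomputable def gaussTerm (a b c z : ℂ) (k : ℕ) : ℂ :=
  poch a k * poch b k / (poch c k * (k.factorial : ℂ)) * z ^ k

theorem gaussTerm_succ (a b c z : ℂ) (k : ℕ) :
    gaussTerm a b c z (k + 1) =
      ((a + k) / (c + k) * ((b + k) / (1 + k)) * z) * gaussTerm a b c z k := by
  simp only [gaussTerm, poch_succ, Nat.factorial_succ, Nat.cast_mul, Nat.cast_succ, pow_succ,
    div_eq_mul_inv, mul_inv]
  ring

theorem summable_gaussTerm (a b c : ℂ) {z : ℂ} (hz : ‖z‖ < 1) : Summable (gaussTerm a b c z) := by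
  have hratio (u v : ℂ) : Tendsto (fun k : ℕ => (u + k) / (v + k)) atTop (𝓝 1) := by
    simpa using tendsto_add_mul_div_add_mul_atTop_nhds u v 1 one_ne_zero
  refine summable_of_eq_smul_of_tendsto_norm_lt_one hz ?_ fun k => by
    rw [gaussTerm_succ, smul_eq_mul]
  simpa only [one_mul] using (((hratio a c).mul (hratio b 1)).mul_const z).norm

-- With `x / 0 = 0`, both sides vanish when a Pochhammer symbol of `d` does.
theorem poch_neg_natCast_mul_gaussTerm (b c d z : ℂ) (m p : ℕ) :
    poch (-(m : ℂ)) p * gaussTerm b c d z m = (-z) ^ p * (poch b p * poch c p / poch d p) *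
      (if p ≤ m then gaussTerm (b + p) (c + p) (d + p) z (m - p) else 0) := by
  split_ifs with h
  · obtain ⟨k, rfl⟩ := Nat.exists_eq_add_of_le h
    have hfac : ((p + k).factorial : ℂ) = (k.factorial : ℂ) * ((p + k).descFactorial p : ℂ) := by
      have := Nat.factorial_mul_descFactorial h
      rw [Nat.add_sub_cancel_left] at this
      exact_mod_cast this.symm
    rw [Nat.add_sub_cancel_left, gaussTerm, gaussTerm, poch_neg_natCast, poch_add b, poch_add c,
      poch_add d, hfac, pow_add, neg_pow z]
    simp only [div_eq_mul_inv, mul_inv]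
    field_simp
  · rw [poch_neg_natCast, Nat.descFactorial_eq_zero_iff_lt.mpr (by omega)]
    simp

theorem threeF2_term_eq (n m : ℕ) (a b c d z : ℂ) (h1a : poch (1 - a) n ≠ 0)
    (han : poch (a - n) m ≠ 0) :
    poch a m * poch b m * poch c m / (poch (a - n) m * poch d m * (m.factorial : ℂ)) * z ^ m =
      1 / poch (1 - a) n * ∑ p ∈ range (n + 1),
        (-z) ^ p * (n.choose p : ℂ) * poch (1 - a) (n - p) * (poch b p * poch c p / poch d p) *
          (if p ≤ m then gaussTerm (b + p) (c + p) (d + p) z (m - p) else 0) := by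
  have hratio : poch a m / poch (a - n) m = poch (1 - a - m) n / poch (1 - a) n := by
    rw [div_eq_div_iff han h1a, mul_comm, poch_one_sub_sub_mul]
  calc _ = poch a m / poch (a - n) m * gaussTerm b c d z m := by
        simp only [gaussTerm, div_eq_mul_inv, mul_inv]; ring
    _ = 1 / poch (1 - a) n * ∑ p ∈ range (n + 1),
          (n.choose p : ℂ) * poch (1 - a) (n - p) * (poch (-(m : ℂ)) p * gaussTerm b c d z m) := by
        rw [hratio, show 1 - a - m = -(m : ℂ) + (1 - a) by ring, poch_add_eq_sum,
          div_mul_eq_mul_div, sum_mul, sum_div, one_div, mul_sum]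
        exact sum_congr rfl fun p _ => by ring
    _ = _ := by
        congr 1
        refine sum_congr rfl fun p _ => ?_
        rw [poch_neg_natCast_mul_gaussTerm]
        ring

theorem threeF2_terminating_reduction_general (n : ℕ) (a b c d z : ℂ)
    (ha : ∀ k : ℤ, a ≠ k) (hz : ‖z‖ < 1) :
    ∑' k : ℕ, poch a k * poch b k * poch c k /
        (poch (a - n) k * poch d k * (Nat.factorial k : ℂ)) * z ^ k =
      (1 / poch (1 - a) n) *
        ∑ p ∈ Finset.range (n + 1), (-z) ^ p * (n.choose p : ℂ) * poch (1 - a) (n - p) *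
          (poch b p * poch c p / poch d p) *
          ∑' k : ℕ, poch (b + p) k * poch (c + p) k /
            (poch (d + p) k * (Nat.factorial k : ℂ)) * z ^ k := by
  have h1a : poch (1 - a) n ≠ 0 :=
    poch_ne_zero (fun i h => ha (1 + i) (by push_cast; linear_combination -h)) n
  have han (m : ℕ) : poch (a - n) m ≠ 0 :=
    poch_ne_zero (fun i h => ha (n - i) (by push_cast; linear_combination h)) m
  rw [tsum_congr fun m => threeF2_term_eq n m a b c d z h1a (han m)]
  exact (hasSum_sum fun (p : ℕ) _ =>
    ((summable_gaussTerm (b + p) (c + p) (d + p) hz).hasSum.ite_le_sub p).mul_left _).mul_left _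
    |>.tsum_eq

theorem threeF2_terminating_reduction (n : ℕ) (a b c d z : ℂ)
    (ha : ∀ k : ℤ, a ≠ k) (hd : ∀ k : ℕ, d ≠ -(k : ℂ)) (hz : ‖z‖ < 1) :
    ∑' k : ℕ, poch a k * poch b k * poch c k /
        (poch (a - n) k * poch d k * (Nat.factorial k : ℂ)) * z ^ k =
      (1 / poch (1 - a) n) *
        ∑ p ∈ Finset.range (n + 1), (-z) ^ p * (n.choose p : ℂ) * poch (1 - a) (n - p) *
          (poch b p * poch c p / poch d p) *
          ∑' k : ℕ, poch (b + p) k * poch (c + p) k /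
            (poch (d + p) k * (Nat.factorial k : ℂ)) * z ^ k :=
  threeF2_terminating_reduction_general n a b c d z ha hz
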